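/- For every λ ∈ ℝ, ∫₀¹ Φ( Φ^{-1}(u) + λ ) du = Φ( λ / √2 ). -/

import Mathlib

/-! If `U` is uniform on `(0,1)`, then `Φ⁻¹(U)` is standard normal, because `Φ⁻¹(U) ≤ x ↔ U ≤ Φ(x)`
by strict monotonicity of `Φ`. Hence the integral is `E[Φ(X + λ)] = P(Y - X ≤ λ)` for independent
standard normals `X, Y`; as `-X` is again standard normal, this is the cdf at `λ` of
`N(0,1) ∗ N(0,1) = N(0,2)`, that is `Φ(λ/√2)`. -/

open MeasureTheory ProbabilityTheory Real

/-- The standard normal cumulative distribution function `Φ`. -/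
noncomputable def stdNormalCDF (t : ℝ) : ℝ := (gaussianReal 0 1 (Set.Iic t)).toReal

open Set
open scoped NNReal

section Quantile

variable {μ : Measure ℝ}

lemma strictMono_cdf_of_absolutelyContinuous [IsProbabilityMeasure μ] (h : volume ≪ μ) :
    StrictMono (cdf μ) := by
  intro a b hab
  have hpos : μ (Ioc a b) ≠ 0 := fun h0 => absurd (h h0) (by simp [hab])
  have hlt : μ (Iic a) < μ (Iic b) := by
    rw [← Iic_union_Ioc_eq_Iic hab.le, measure_union (Iic_disjoint_Ioc le_rfl) measurableSet_Ioc]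
    exact ENNReal.lt_add_right (measure_ne_top _ _) hpos
  rwa [← ofReal_cdf, ← ofReal_cdf, ENNReal.ofReal_lt_ofReal_iff_of_nonneg (cdf_nonneg _ _)] at hlt

variable {Q : ℝ → ℝ}

lemma monotoneOn_of_cdf_rightInverse (hF : StrictMono (cdf μ))
    (hQ : ∀ p ∈ Ioo 0 1, cdf μ (Q p) = p) : MonotoneOn Q (Ioo 0 1) := fun p hp q hq hpq => by
  rwa [← hF.le_iff_le, hQ p hp, hQ q hq]

-- `Q` itself need not be measurable: only its values on `(0,1)` are pinned down.
lemma aemeasurable_of_cdf_rightInverse (hF : StrictMono (cdf μ))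
    (hQ : ∀ p ∈ Ioo 0 1, cdf μ (Q p) = p) : AEMeasurable Q (volume.restrict (Ioo 0 1)) :=
  aemeasurable_restrict_of_monotoneOn measurableSet_Ioo (monotoneOn_of_cdf_rightInverse hF hQ)

lemma map_restrict_Ioo_of_cdf_rightInverse [IsProbabilityMeasure μ] (hF : StrictMono (cdf μ))
    (hQ : ∀ p ∈ Ioo 0 1, cdf μ (Q p) = p) : (volume.restrict (Ioo 0 1)).map Q = μ := by
  refine Measure.ext_of_Iic _ _ fun x => ?_
  have hpre : Q ⁻¹' Iic x ∩ Ioo 0 1 = Iic (cdf μ x) ∩ Ioo 0 1 := by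
    ext p
    simp only [mem_inter_iff, mem_preimage, mem_Iic, and_congr_left_iff]
    intro hp
    rw [← hF.le_iff_le, hQ p hp]
  have hIcc : Iic (cdf μ x) ∩ Icc 0 1 = Icc 0 (cdf μ x) := by
    ext p
    simp only [mem_inter_iff, mem_Iic, mem_Icc]
    exact ⟨fun h => ⟨h.2.1, h.1⟩, fun h => ⟨h.2, h.1, h.2.trans (cdf_le_one μ x)⟩⟩
  rw [Measure.map_apply_of_aemeasurable (aemeasurable_of_cdf_rightInverse hF hQ)
      measurableSet_Iic, Measure.restrict_apply' measurableSet_Ioo, hpre,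
    ← Measure.restrict_apply' measurableSet_Ioo, Measure.restrict_congr_set Ioo_ae_eq_Icc,
    Measure.restrict_apply' measurableSet_Icc, hIcc, Real.volume_Icc, sub_zero, ofReal_cdf]

lemma integral_comp_of_cdf_rightInverse [IsProbabilityMeasure μ] (hF : StrictMono (cdf μ))
    (hQ : ∀ p ∈ Ioo 0 1, cdf μ (Q p) = p) {f : ℝ → ℝ} (hf : AEStronglyMeasurable f μ) :
    ∫ u in (0 : ℝ)..1, f (Q u) = ∫ x, f x ∂μ := by
  have hmap := map_restrict_Ioo_of_cdf_rightInverse hF hQ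
  rw [intervalIntegral.integral_of_le zero_le_one, Measure.restrict_congr_set Ioo_ae_eq_Ioc.symm,
    ← integral_map (aemeasurable_of_cdf_rightInverse hF hQ) (hmap ▸ hf), hmap]

end Quantile

lemma integral_cdf_sub_eq_cdf_conv (μ ν : Measure ℝ) [IsProbabilityMeasure μ]
    [IsProbabilityMeasure ν] (c : ℝ) : ∫ x, cdf ν (c - x) ∂μ = cdf (μ ∗ ν) c := by
  have hslice : ∀ x : ℝ, Prod.mk x ⁻¹' ((fun p : ℝ × ℝ => p.1 + p.2) ⁻¹' Iic c) = Iic (c - x) :=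
    fun x => by ext y; simp [le_sub_iff_add_le']
  have hconv : (μ ∗ ν) (Iic c) = ∫⁻ x, ν (Iic (c - x)) ∂μ := by
    rw [Measure.conv, Measure.map_apply measurable_add measurableSet_Iic,
      Measure.prod_apply (measurable_add measurableSet_Iic)]
    simp_rw [hslice]
  have hmeas : Measurable fun x => cdf ν (c - x) :=
    (monotone_cdf ν).measurable.comp (measurable_const.sub measurable_id)
  rw [integral_eq_lintegral_of_nonneg_ae (ae_of_all _ fun x => cdf_nonneg _ _)
    hmeas.aestronglyMeasurable, cdf_eq_real, measureReal_def, hconv]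
  simp_rw [ofReal_cdf]

lemma stdNormalCDF_eq_cdf : stdNormalCDF = cdf (gaussianReal 0 1) :=
  funext fun t => by rw [cdf_eq_real, measureReal_def, stdNormalCDF]

lemma cdf_gaussianReal_zero_eq_cdf_div_sqrt {v : ℝ≥0} (hv : v ≠ 0) (c : ℝ) :
    cdf (gaussianReal 0 v) c = cdf (gaussianReal 0 1) (c / √(v : ℝ)) := by
  have hsqrt : 0 < √(v : ℝ) := Real.sqrt_pos.mpr (NNReal.coe_pos.mpr (pos_iff_ne_zero.mpr hv))
  have hmap : (gaussianReal 0 1).map (√(v : ℝ) * ·) = gaussianReal 0 v := by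
    rw [gaussianReal_map_const_mul, mul_zero, mul_one]
    congr
    exact Real.sq_sqrt v.2
  have hpre : (√(v : ℝ) * ·) ⁻¹' Iic c = Iic (c / √(v : ℝ)) := by
    ext x
    simp [le_div_iff₀ hsqrt, mul_comm]
  rw [cdf_eq_real, cdf_eq_real, ← hmap,
    map_measureReal_apply (measurable_const_mul _) measurableSet_Iic, hpre]

lemma integral_cdf_gaussianReal_add (v : ℝ≥0) (c : ℝ) :
    ∫ x, cdf (gaussianReal 0 v) (x + c) ∂gaussianReal 0 v = cdf (gaussianReal 0 (2 * v)) c := by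
  have hmeas : Measurable fun x => cdf (gaussianReal 0 v) (x + c) :=
    (monotone_cdf _).measurable.comp (measurable_add_const c)
  calc ∫ x, cdf (gaussianReal 0 v) (x + c) ∂gaussianReal 0 v
      = ∫ x, cdf (gaussianReal 0 v) (x + c) ∂(gaussianReal 0 v).map (fun x => -x) := by
        rw [gaussianReal_map_neg, neg_zero]
    _ = ∫ x, cdf (gaussianReal 0 v) (c - x) ∂gaussianReal 0 v := by
        rw [integral_map measurable_neg.aemeasurable hmeas.aestronglyMeasurable]
        simp_rw [neg_add_eq_sub]
    _ = cdf (gaussianReal 0 (2 * v)) c := by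
        rw [integral_cdf_sub_eq_cdf_conv, gaussianReal_conv_gaussianReal, add_zero, two_mul]

/-- For every `λ ∈ ℝ`, `∫₀¹ Φ(Φ⁻¹(u) + λ) du = Φ(λ/√2)`, where `Φinv` is any right
inverse of the standard normal cdf on `(0,1)`. -/
theorem integral_cdf_shift_quantile
    (Φinv : ℝ → ℝ) (hΦinv : ∀ p ∈ Set.Ioo (0 : ℝ) 1, stdNormalCDF (Φinv p) = p)
    (lam : ℝ) :
    ∫ u in (0 : ℝ)..1, stdNormalCDF (Φinv u + lam) = stdNormalCDF (lam / Real.sqrt 2) := by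
  rw [stdNormalCDF_eq_cdf] at hΦinv ⊢
  have hF : StrictMono (cdf (gaussianReal 0 1)) :=
    strictMono_cdf_of_absolutelyContinuous (gaussianReal_absolutelyContinuous' 0 one_ne_zero)
  have hmeas : Measurable fun x => cdf (gaussianReal 0 1) (x + lam) :=
    (monotone_cdf _).measurable.comp (measurable_add_const lam)
  rw [integral_comp_of_cdf_rightInverse hF hΦinv hmeas.aestronglyMeasurable,
    integral_cdf_gaussianReal_add, mul_one, cdf_gaussianReal_zero_eq_cdf_div_sqrt two_ne_zero]
  norm_cast
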